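/- arXiv:2605.04112 — 4 statements merged into one kernel-verified Lean document; each statement's English description precedes it below -/
import Mathlib

section
/- Let E_{B|A}, E_{C|B}, E_{C|A} be linear maps between operator spaces of finite-dimensional Hilbert spaces with Jamiołkowski operators ϱ_{B|A}, ϱ_{C|B}, ϱ_{C|A} (the partial transposes over the input space of the Choi operators). Then E_{C|A} = E_{C|B} ∘ E_{B|A} if and only if ϱ_{C|A} = Tr_B[(I_A ⊗ ϱ_{C|B})(ϱ_{B|A} ⊗ I_C)]. -/
open Matrix

noncomputable section

/-- The Jamiołkowski operator of a linear map `E : L(H_A) → L(H_B)`: the partial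
transpose over the input space of the Choi operator, so that
`E(M) = Tr_A[ϱ (M ⊗ I_B)]`. -/
def jam {A B : Type*} [DecidableEq A]
    (E : Matrix A A ℂ →ₗ[ℂ] Matrix B B ℂ) : Matrix (A × B) (A × B) ℂ :=
  Matrix.of fun p q => E (Matrix.single q.1 p.1 1) p.2 q.2

/-!
A linear map on matrices is determined by its values on the matrix units, and so by its
Jamiołkowski operator. Reading the recovery formula `E(M) = Tr_A[ϱ (M ⊗ I)]` for `E_{C|B}` at
`M = E_{B|A}(|a'⟩⟨a|)` and expanding the entries of `M` through `ϱ_{B|A}` once more shows that the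
Jamiołkowski operator of `E_{C|B} ∘ E_{B|A}` is exactly the link product
`Tr_B[(I_A ⊗ ϱ_{C|B})(ϱ_{B|A} ⊗ I_C)]`.
-/

open scoped Kronecker

namespace Matrix

variable {A B C R : Type*} [Fintype B]

def partialTraceMiddle [AddCommMonoid R] (M : Matrix (A × B × C) (A × B × C) R) : Matrix (A × C) (A × C) R :=
  of fun p q => ∑ b, M (p.1, b, p.2) (q.1, b, q.2)

/-- The link product `Tr_B[(I_A ⊗ σ)(ρ ⊗ I_C)]` of `σ` on `B ⊗ C` and `ρ` on `A ⊗ B`. -/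
def linkProduct [Fintype A] [Fintype C] [DecidableEq A] [DecidableEq C] [Semiring R] (σ : Matrix (B × C) (B × C) R) (ρ : Matrix (A × B) (A × B) R) :
    Matrix (A × C) (A × C) R :=
  partialTraceMiddle ((1 ⊗ₖ σ) *
    reindex (Equiv.prodAssoc A B C) (Equiv.prodAssoc A B C) (ρ ⊗ₖ (1 : Matrix C C R)))

end Matrix

section Jamiolkowski

variable {A B C : Type*} [DecidableEq A]

theorem jam_apply (E : Matrix A A ℂ →ₗ[ℂ] Matrix B B ℂ) (a a' : A) (b b' : B) :
    jam E (a, b) (a', b') = E (single a' a 1) b b' :=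
  rfl

variable [Fintype A]

theorem jam_injective : Function.Injective (jam : (Matrix A A ℂ →ₗ[ℂ] Matrix B B ℂ) → _) := by
  intro E F h
  refine ext_linearMap ℂ fun a' a => LinearMap.ext_ring ?_
  ext b b'
  exact congrFun (congrFun h (a, b)) (a', b')

/-- The recovery formula `E(M) = Tr_A[ϱ (M ⊗ I_B)]`, entrywise. -/
theorem apply_apply_eq_sum_jam (E : Matrix A A ℂ →ₗ[ℂ] Matrix B B ℂ) (M : Matrix A A ℂ)
    (b b' : B) : E M b b' = ∑ a, ∑ a', jam E (a, b) (a', b') * M a' a := by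
  conv_lhs => rw [matrix_eq_sum_single M]
  simp only [map_sum, Matrix.sum_apply, jam_apply]
  rw [Finset.sum_comm]
  refine Fintype.sum_congr _ _ fun a => Fintype.sum_congr _ _ fun a' => ?_
  have hsingle : single a' a (M a' a) = M a' a • single a' a 1 := by
    rw [smul_single, smul_eq_mul, mul_one]
  rw [hsingle, _root_.map_smul, Matrix.smul_apply, smul_eq_mul, mul_comm]

theorem jam_comp [Fintype B] [DecidableEq B] [Fintype C] [DecidableEq C]
    (EBA : Matrix A A ℂ →ₗ[ℂ] Matrix B B ℂ) (ECB : Matrix B B ℂ →ₗ[ℂ] Matrix C C ℂ) :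
    jam (ECB ∘ₗ EBA) = linkProduct (jam ECB) (jam EBA) := by
  ext ⟨a, c⟩ ⟨a', c'⟩
  rw [jam_apply, LinearMap.comp_apply, apply_apply_eq_sum_jam]
  simp [linkProduct, partialTraceMiddle, mul_apply, one_apply, Fintype.sum_prod_type, jam_apply]

end Jamiolkowski

/-- `E_{C|A} = E_{C|B} ∘ E_{B|A}` iff the Jamiołkowski operators satisfy
`ϱ_{C|A} = Tr_B[(I_A ⊗ ϱ_{C|B})(ϱ_{B|A} ⊗ I_C)]`. -/
theorem jam_composition {A B C : Type*}
    [Fintype A] [Fintype B] [Fintype C]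
    [DecidableEq A] [DecidableEq B] [DecidableEq C]
    (EBA : Matrix A A ℂ →ₗ[ℂ] Matrix B B ℂ)
    (ECB : Matrix B B ℂ →ₗ[ℂ] Matrix C C ℂ)
    (ECA : Matrix A A ℂ →ₗ[ℂ] Matrix C C ℂ) :
    ECA = ECB.comp EBA ↔
      jam ECA =
        Matrix.of (fun p q : A × C =>
          ∑ b : B,
            ((Matrix.of fun u v : A × B × C =>
                (if u.1 = v.1 then (1 : ℂ) else 0) * jam ECB (u.2.1, u.2.2) (v.2.1, v.2.2)) *
             (Matrix.of fun u v : A × B × C =>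
                jam EBA (u.1, u.2.1) (v.1, v.2.1) * (if u.2.2 = v.2.2 then (1 : ℂ) else 0)))
              (p.1, b, p.2) (q.1, b, q.2)) := by
  change _ ↔ jam ECA = linkProduct (jam ECB) (jam EBA)
  rw [← jam_comp, jam_injective.eq_iff]
end
end

section
/- Let N : L(H_A) → L(H_B) be a CPTP map, ρ_A ∈ L(H_A) a positive definite density operator, and ρ_B = N(ρ_A) positive definite. Then the Petz recovery map R(X) := ρ_A^{1/2} N†(ρ_B^{-1/2} X ρ_B^{-1/2}) ρ_A^{1/2} is a CPTP map from L(H_B) to L(H_A), and it satisfies R(ρ_B) = ρ_A. -/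
open Matrix
open scoped ComplexOrder

noncomputable section

/-- Complete positivity. -/
def IsCompletelyPositive {A B : Type*} [Fintype A] [Fintype B]
    (E : Matrix A A ℂ → Matrix B B ℂ) : Prop :=
  ∀ (k : ℕ) (P : Matrix (Fin k × A) (Fin k × A) ℂ), P.PosSemidef →
    (Matrix.of fun p q : Fin k × B =>
      E (Matrix.of fun i j => P (p.1, i) (q.1, j)) p.2 q.2).PosSemidef

/-- Trace preserving. -/
def IsTracePreserving {A B : Type*} [Fintype A] [Fintype B]
    (E : Matrix A A ℂ → Matrix B B ℂ) : Prop :=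
  ∀ X, (E X).trace = X.trace

/-!
Complete positivity passes to Hilbert–Schmidt adjoints: for `P ≥ 0` and a vector `v`,
`v* (id ⊗ N†)(P) v = tr((id ⊗ N)(v v*) P)`, the trace of a product of two positive matrices.
Hence the Petz map, a composite of two congruences `X ↦ Mᴴ X M` and `N†`, is completely
positive.
It preserves traces and sends `ρ_B` to `ρ_A` because `N†` is unital (dual to `N` preserving
traces) and `ρ_B^{-1/2} ρ_B ρ_B^{-1/2} = 1`.
-/

namespace Matrix

/-- Over `ℂ` no Hermitian hypothesis is needed: a real quadratic form forces `M = Mᴴ`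
by polarization. -/
theorem posSemidef_of_forall_dotProduct_mulVec_nonneg {n : Type*} [Fintype n] {M : Matrix n n ℂ}
    (h : ∀ v : n → ℂ, 0 ≤ star v ⬝ᵥ (M *ᵥ v)) : M.PosSemidef := by
  classical
  rw [← isPositive_toEuclideanLin_iff, LinearMap.isPositive_iff_complex]
  intro x
  have hx := h x.ofLp
  rw [EuclideanSpace.inner_eq_star_dotProduct, ofLp_toLpLin, toLin'_apply, dotProduct_star,
    dotProduct_comm, (IsSelfAdjoint.of_nonneg hx).star_eq]
  exact ⟨(Complex.eq_re_of_ofReal_le (by rwa [Complex.ofReal_zero])).symm,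
    (Complex.nonneg_iff.mp hx).1⟩

theorem PosSemidef.trace_mul_nonneg {n 𝕜 : Type*} [Fintype n] [RCLike 𝕜]
    {P Q : Matrix n n 𝕜} (hP : P.PosSemidef) (hQ : Q.PosSemidef) : 0 ≤ (P * Q).trace := by
  classical
  open scoped MatrixOrder in
  obtain ⟨S, rfl⟩ := CStarAlgebra.nonneg_iff_eq_star_mul_self.mp hP.nonneg
  rw [star_eq_conjTranspose, Matrix.mul_assoc, trace_mul_comm]
  exact (hQ.mul_mul_conjTranspose_same S).trace_nonneg

theorem trace_conjTranspose_mul_eq_sum {m n α : Type*} [Fintype m] [Fintype n]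
    [NonUnitalNonAssocSemiring α] [StarRing α] (X Y : Matrix m n α) :
    (Xᴴ * Y).trace = ∑ i, ∑ j, star (X i j) * Y i j := by
  simp only [trace, diag, mul_apply, conjTranspose_apply]
  exact Finset.sum_comm

theorem trace_conjTranspose_mul_eq_sum_blocks {ι m n α : Type*} [Fintype ι] [Fintype m]
    [Fintype n] [NonUnitalNonAssocSemiring α] [StarRing α] (X Y : Matrix (ι × m) (ι × n) α) :
    (Xᴴ * Y).trace = ∑ i, ∑ j,
      ((of fun a b => X (i, a) (j, b))ᴴ * of fun a b => Y (i, a) (j, b)).trace := by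
  simp only [trace_conjTranspose_mul_eq_sum, Fintype.sum_prod_type, of_apply]
  exact Finset.sum_congr rfl fun _ _ => Finset.sum_comm

theorem mul_mul_eq_one_of_mul_self_eq_inv {n K : Type*} [Fintype n] [DecidableEq n]
    [CommRing K] {t ρ : Matrix n n K} (hρ : IsUnit ρ) (ht : t * t = ρ⁻¹) : t * ρ * t = 1 :=
  mul_eq_one_comm.mp <| by
    rw [← Matrix.mul_assoc, ht, nonsing_inv_mul _ ((isUnit_iff_isUnit_det ρ).mp hρ)]

end Matrix

/-- The map `id_ι ⊗ E` on block matrices with blocks indexed by `ι × ι`. -/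
def ampliation {A B α β : Type*} (ι : Type*) (E : Matrix A A α → Matrix B B β)
    (P : Matrix (ι × A) (ι × A) α) : Matrix (ι × B) (ι × B) β :=
  of fun p q => E (of fun a b => P (p.1, a) (q.1, b)) p.2 q.2

theorem of_ampliation_apply {A B α β ι : Type*} (E : Matrix A A α → Matrix B B β)
    (P : Matrix (ι × A) (ι × A) α) (i j : ι) :
    (of fun a b => ampliation ι E P (i, a) (j, b)) = E (of fun a b => P (i, a) (j, b)) :=
  rfl

section Channels

variable {A B C : Type*} [Fintype A] [Fintype B] [Fintype C]

theorem isCompletelyPositive_iff {E : Matrix A A ℂ → Matrix B B ℂ} :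
    IsCompletelyPositive E ↔ ∀ k (P : Matrix (Fin k × A) (Fin k × A) ℂ),
      P.PosSemidef → (ampliation (Fin k) E P).PosSemidef :=
  Iff.rfl

theorem IsCompletelyPositive.comp {E : Matrix A A ℂ → Matrix B B ℂ}
    {F : Matrix B B ℂ → Matrix C C ℂ} (hF : IsCompletelyPositive F)
    (hE : IsCompletelyPositive E) : IsCompletelyPositive (F ∘ E) :=
  fun k P hP => hF k _ (hE k P hP)

theorem isCompletelyPositive_conjTranspose_mul_mul (M : Matrix A B ℂ) :
    IsCompletelyPositive (fun X : Matrix A A ℂ => Mᴴ * X * M) := by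
  classical
  refine isCompletelyPositive_iff.mpr fun k P hP => ?_
  have hblock : ampliation (Fin k) (fun X : Matrix A A ℂ => Mᴴ * X * M) P =
      (kronecker (1 : Matrix (Fin k) (Fin k) ℂ) M)ᴴ * P *
        kronecker (1 : Matrix (Fin k) (Fin k) ℂ) M := by
    ext ⟨i, a⟩ ⟨j, b⟩
    simp [ampliation, mul_apply, Fintype.sum_prod_type, kroneckerMap_apply, one_apply,
      Finset.sum_mul, apply_ite (starRingEnd ℂ), ite_mul, Finset.sum_ite_eq']
  exact hblock ▸ hP.conjTranspose_mul_mul_same _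

theorem trace_conjTranspose_mul_ampliation {ι : Type*} [Fintype ι]
    {E : Matrix A A ℂ → Matrix B B ℂ} {F : Matrix B B ℂ → Matrix A A ℂ}
    (hEF : ∀ X Y, ((E X)ᴴ * Y).trace = (Xᴴ * F Y).trace) (X : Matrix (ι × A) (ι × A) ℂ)
    (Y : Matrix (ι × B) (ι × B) ℂ) :
    ((ampliation ι E X)ᴴ * Y).trace = (Xᴴ * ampliation ι F Y).trace := by
  simp only [trace_conjTranspose_mul_eq_sum_blocks, of_ampliation_apply, hEF]

theorem IsCompletelyPositive.adjoint {E : Matrix A A ℂ → Matrix B B ℂ}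
    {F : Matrix B B ℂ → Matrix A A ℂ} (hE : IsCompletelyPositive E)
    (hEF : ∀ X Y, ((E X)ᴴ * Y).trace = (Xᴴ * F Y).trace) : IsCompletelyPositive F := by
  refine isCompletelyPositive_iff.mpr fun k P hP => ?_
  refine posSemidef_of_forall_dotProduct_mulVec_nonneg fun v => ?_
  have hvv := posSemidef_vecMulVec_self_star v
  have hEvv : (ampliation (Fin k) E (vecMulVec v (star v))).PosSemidef := hE k _ hvv
  calc 0 ≤ (ampliation (Fin k) E (vecMulVec v (star v)) * P).trace :=
        hEvv.trace_mul_nonneg hP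
    _ = ((vecMulVec v (star v))ᴴ * ampliation (Fin k) F P).trace := by
      rw [← trace_conjTranspose_mul_ampliation hEF, hEvv.isHermitian.eq]
    _ = star v ⬝ᵥ (ampliation (Fin k) F P *ᵥ v) := by
      rw [hvv.isHermitian.eq, trace_mul_comm, mul_vecMulVec, trace_vecMulVec, dotProduct_comm]

theorem IsTracePreserving.adjoint_map_one [DecidableEq A] [DecidableEq B]
    {E : Matrix A A ℂ → Matrix B B ℂ} {F : Matrix B B ℂ → Matrix A A ℂ}
    (hE : IsTracePreserving E) (hEF : ∀ X Y, ((E X)ᴴ * Y).trace = (Xᴴ * F Y).trace) :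
    F 1 = 1 := by
  refine ext_iff_trace_mul_left.mpr fun X => ?_
  rw [← conjTranspose_conjTranspose X, ← hEF, Matrix.mul_one, Matrix.mul_one,
    trace_conjTranspose, trace_conjTranspose, hE]

end Channels

theorem petz_recovery_cptp_general {A B : Type*}
    [Fintype A] [Fintype B] [DecidableEq B]
    (N : Matrix A A ℂ →ₗ[ℂ] Matrix B B ℂ)
    (Ndag : Matrix B B ℂ →ₗ[ℂ] Matrix A A ℂ)
    (hadj : ∀ (X : Matrix A A ℂ) (Y : Matrix B B ℂ),
      Matrix.trace ((N X)ᴴ * Y) = Matrix.trace (Xᴴ * Ndag Y))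
    (hNcp : IsCompletelyPositive (fun X => N X))
    (hNtp : IsTracePreserving (fun X => N X))
    (ρA : Matrix A A ℂ)
    (ρB : Matrix B B ℂ) (hρB : ρB = N ρA) (hρBpd : ρB.PosDef)
    (sA : Matrix A A ℂ) (hsA : sA.IsHermitian) (hsA2 : sA * sA = ρA)
    (tB : Matrix B B ℂ) (htB : tB.IsHermitian) (htB2 : tB * tB = ρB⁻¹)
    (R : Matrix B B ℂ → Matrix A A ℂ)
    (hR : ∀ X, R X = sA * Ndag (tB * X * tB) * sA) :
    IsCompletelyPositive R ∧ IsTracePreserving R ∧ R ρB = ρA := by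
  classical
  have hunital : Ndag 1 = 1 := hNtp.adjoint_map_one hadj
  have hcancel : tB * ρB * tB = 1 := mul_mul_eq_one_of_mul_self_eq_inv hρBpd.isUnit htB2
  refine ⟨?_, fun X => ?_, by rw [hR, hcancel, hunital, Matrix.mul_one, hsA2]⟩
  · have hcomp :
        R = (fun Z => sAᴴ * Z * sA) ∘ (fun Y => Ndag Y) ∘ (fun X => tBᴴ * X * tB) := by
      funext X
      simp only [hR, Function.comp_apply, hsA.eq, htB.eq]
    rw [hcomp]
    exact (isCompletelyPositive_conjTranspose_mul_mul sA).comp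
      ((hNcp.adjoint hadj).comp (isCompletelyPositive_conjTranspose_mul_mul tB))
  · calc (R X).trace = ((sA * sA)ᴴ * Ndag (tB * X * tB)).trace := by
          rw [hR, trace_mul_cycle, conjTranspose_mul, hsA.eq]
      _ = (ρBᴴ * (tB * X * tB)).trace := by rw [hsA2, ← hadj, hρB]
      _ = (tB * ρB * tB * X).trace := by
          rw [hρBpd.isHermitian.eq, ← Matrix.mul_assoc, ← Matrix.mul_assoc, trace_mul_comm,
            ← Matrix.mul_assoc, ← Matrix.mul_assoc]
      _ = X.trace := by rw [hcancel, Matrix.one_mul]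

/-- the Petz recovery map
`R(X) = ρ_A^{1/2} N†(ρ_B^{-1/2} X ρ_B^{-1/2}) ρ_A^{1/2}` of a CPTP map `N` with
positive definite reference state `ρ_A` and `ρ_B = N(ρ_A)` positive definite is a
CPTP map from `L(H_B)` to `L(H_A)` satisfying `R(ρ_B) = ρ_A`.
Here `sA = ρ_A^{1/2}` and `tB = ρ_B^{-1/2}` are Hermitian square roots and `N†`
is the Hilbert–Schmidt adjoint of `N`. -/
theorem petz_recovery_cptp {A B : Type*}
    [Fintype A] [Fintype B] [DecidableEq A] [DecidableEq B]
    (N : Matrix A A ℂ →ₗ[ℂ] Matrix B B ℂ)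
    (Ndag : Matrix B B ℂ →ₗ[ℂ] Matrix A A ℂ)
    (hadj : ∀ (X : Matrix A A ℂ) (Y : Matrix B B ℂ),
      Matrix.trace ((N X)ᴴ * Y) = Matrix.trace (Xᴴ * Ndag Y))
    (hNcp : IsCompletelyPositive (fun X => N X))
    (hNtp : IsTracePreserving (fun X => N X))
    (ρA : Matrix A A ℂ) (hρA : ρA.PosDef) (hρAtr : ρA.trace = 1)
    (ρB : Matrix B B ℂ) (hρB : ρB = N ρA) (hρBpd : ρB.PosDef)
    (sA : Matrix A A ℂ) (hsA : sA.IsHermitian) (hsA2 : sA * sA = ρA)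
    (tB : Matrix B B ℂ) (htB : tB.IsHermitian) (htB2 : tB * tB = ρB⁻¹)
    (R : Matrix B B ℂ → Matrix A A ℂ)
    (hR : ∀ X, R X = sA * Ndag (tB * X * tB) * sA) :
    IsCompletelyPositive R ∧ IsTracePreserving R ∧ R ρB = ρA :=
  petz_recovery_cptp_general N Ndag hadj hNcp hNtp ρA ρB hρB hρBpd sA hsA hsA2 tB htB htB2 R hR
end
end

section
/- Partial trace intertwines the z-interaction evolution with a dephasing-type qubit evolution plus a correlation term: for ρ in two-qubit Bloch form with parameters (r, s, T) and U = diag(e^{it},e^{-it},e^{-it},e^{it}), one has Tr₂(U ρ U†) = (1/2)(I + r'·σ) where r'₁ = r₁cos 2t + t₂₃ sin 2t, r'₂ = r₂ cos 2t − t₁₃ sin 2t, and r'₃ = r₃ (writing T = (t_{ij})). -/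
open Matrix
open scoped Kronecker

noncomputable section

/-- The Pauli matrices. -/
def σP : Fin 3 → Matrix (Fin 2) (Fin 2) ℂ :=
  ![!![0, 1; 1, 0], !![0, -Complex.I; Complex.I, 0], !![1, 0; 0, -1]]

/-- The general two-qubit Bloch form. -/
def bloch2 (r s : Fin 3 → ℝ) (T : Matrix (Fin 3) (Fin 3) ℝ) :
    Matrix (Fin 2 × Fin 2) (Fin 2 × Fin 2) ℂ :=
  (1 / 4 : ℂ) •
    ((1 : Matrix (Fin 2 × Fin 2) (Fin 2 × Fin 2) ℂ)
      + (∑ i, (r i : ℂ) • (σP i ⊗ₖ (1 : Matrix (Fin 2) (Fin 2) ℂ)))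
      + (∑ j, (s j : ℂ) • ((1 : Matrix (Fin 2) (Fin 2) ℂ) ⊗ₖ σP j))
      + ∑ i, ∑ j, (T i j : ℂ) • (σP i ⊗ₖ σP j))

/-- Partial trace over the second tensor factor. -/
def ptSnd {α β : Type*} [Fintype β] (M : Matrix (α × β) (α × β) ℂ) : Matrix α α ℂ :=
  Matrix.of fun i j => ∑ b, M (i, b) (j, b)

/-- The z-interaction unitary `U = diag(e^{it}, e^{-it}, e^{-it}, e^{it})` on
`ℂ² ⊗ ℂ²` in the computational basis. -/
def Uz2 (t : ℝ) : Matrix (Fin 2 × Fin 2) (Fin 2 × Fin 2) ℂ :=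
  Matrix.diagonal fun p => Complex.exp (Complex.I * t * (if p.1 = p.2 then 1 else -1))

set_option maxHeartbeats 2000000 in
/-- `Tr₂(U ρ U†) = (1/2)(I + r'·σ)` with
`r'₁ = r₁ cos 2t + t₂₃ sin 2t`, `r'₂ = r₂ cos 2t − t₁₃ sin 2t`, `r'₃ = r₃`. -/
theorem ptrace_z_interaction (t : ℝ) (r s : Fin 3 → ℝ)
    (T : Matrix (Fin 3) (Fin 3) ℝ) :
    ptSnd (Uz2 t * bloch2 r s T * (Uz2 t)ᴴ) =
      (1 / 2 : ℂ) •
        ((1 : Matrix (Fin 2) (Fin 2) ℂ)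
          + ((r 0 * Real.cos (2 * t) + T 1 2 * Real.sin (2 * t) : ℝ) : ℂ) • σP 0
          + ((r 1 * Real.cos (2 * t) - T 0 2 * Real.sin (2 * t) : ℝ) : ℂ) • σP 1
          + ((r 2 : ℝ) : ℂ) • σP 2) := by
  have hU : ∀ p q : Fin 2 × Fin 2, (Uz2 t * bloch2 r s T * (Uz2 t)ᴴ) p q =
      Complex.exp (Complex.I * t * (if p.1 = p.2 then 1 else -1)) * bloch2 r s T p q *
        Complex.exp (-(Complex.I * t * (if q.1 = q.2 then 1 else -1))) := by
    intro p q
    rw [Uz2, Matrix.diagonal_conjTranspose, Matrix.mul_diagonal, Matrix.diagonal_mul]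
    by_cases h : q.1 = q.2 <;> simp [h, ← Complex.exp_conj, Complex.conj_I, mul_assoc]
  ext i j
  simp only [ptSnd, Matrix.of_apply, Fin.sum_univ_two, hU]
  have hab : Complex.exp (Complex.I * t) * Complex.exp (-(Complex.I * t)) = 1 := by
    rw [← Complex.exp_add]; ring_nf; exact Complex.exp_zero
  have hc : Complex.cos (2 * (t : ℂ)) =
      (Complex.exp (Complex.I * t) * Complex.exp (Complex.I * t)
        + Complex.exp (-(Complex.I * t)) * Complex.exp (-(Complex.I * t))) / 2 := by
    rw [Complex.cos, ← Complex.exp_add, ← Complex.exp_add]; ring_nf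
  have hs : Complex.sin (2 * (t : ℂ)) =
      (Complex.exp (-(Complex.I * t)) * Complex.exp (-(Complex.I * t))
        - Complex.exp (Complex.I * t) * Complex.exp (Complex.I * t)) * Complex.I / 2 := by
    rw [Complex.sin, ← Complex.exp_add, ← Complex.exp_add]; ring_nf
  fin_cases i <;> fin_cases j <;>
    simp [bloch2, σP, Fin.sum_univ_three, Matrix.one_apply, Matrix.kroneckerMap_apply,
      Prod.ext_iff, hc, hs]
  · linear_combination (2⁻¹ * (1 + (r 2 : ℂ)) + 4⁻¹ * ((s 2 : ℂ) + T 2 2)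
      - 4⁻¹ * ((s 2 : ℂ) + T 2 2)) * hab
  · linear_combination ((T 0 2 : ℂ) / 4 * (Complex.exp (Complex.I*t)^2
      - Complex.exp (-(Complex.I*t))^2)) * Complex.I_sq
  · linear_combination (-(T 0 2 : ℂ) / 4 * (Complex.exp (Complex.I*t)^2
      - Complex.exp (-(Complex.I*t))^2)) * Complex.I_sq
  · linear_combination (2⁻¹ * (1 - (r 2 : ℂ))) * hab
end
end

section
/- The blurred-and-saturated detector is SWAP-invariant: for every ρ ∈ L(ℂ²⊗ℂ²), Λ_BnS(U_swap ρ U_swap†) = Λ_BnS(ρ). Consequently, the identity channel on L(ℂ²) is an emergent dynamics making the coarse-graining diagram commute for the SWAP microscopic evolution: id ∘ Λ_BnS = Λ_BnS ∘ U_swap(·)U_swap†. -/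
open Matrix

noncomputable section

/-- `1/√3` as a complex number. -/
def c3 : ℂ := ((Real.sqrt 3 : ℝ) : ℂ)⁻¹

/-- The four Kraus operators of the blurred-and-saturated detector. -/
def K : Fin 4 → Matrix (Fin 2) (Fin 4) ℂ :=
  ![!![1, 0, 0, 0; 0, c3, c3, c3],
    !![0, 0, 0, 0; 0, c3, 0, -c3],
    !![0, 0, 0, 0; 0, c3, -c3, 0],
    !![0, 0, 0, 0; 0, 0, c3, -c3]]

/-- The blurred-and-saturated detector coarse-graining map. -/
def ΛBnS (ρ : Matrix (Fin 4) (Fin 4) ℂ) : Matrix (Fin 2) (Fin 2) ℂ :=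
  ∑ i, K i * ρ * (K i)ᴴ

/-- The SWAP unitary on `ℂ²⊗ℂ²` in the computational basis `|00⟩,|01⟩,|10⟩,|11⟩`. -/
def Uswap4 : Matrix (Fin 4) (Fin 4) ℂ :=
  !![1, 0, 0, 0; 0, 0, 1, 0; 0, 1, 0, 0; 0, 0, 0, 1]

/-! Right multiplication by SWAP permutes the Kraus operators of `Λ_BnS` up to signs, and a
Kraus map is unchanged when its Kraus operators are permuted and multiplied by unit
phases, since each phase cancels against its conjugate in `K ρ Kᴴ`. -/

section KrausMap

variable {ι m n R : Type*} [Fintype ι] [Fintype n] [CommRing R] [StarRing R]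

theorem sum_kraus_conj_eq_of_mul_eq_smul (K : ι → Matrix m n R) (U : Matrix n n R)
    (σ : Equiv.Perm ι) (c : ι → R) (hc : ∀ i, c i * star (c i) = 1)
    (hK : ∀ i, K i * U = c i • K (σ i)) (ρ : Matrix n n R) :
    ∑ i, K i * (U * ρ * Uᴴ) * (K i)ᴴ = ∑ i, K i * ρ * (K i)ᴴ := by
  have hterm : ∀ i, K i * (U * ρ * Uᴴ) * (K i)ᴴ = K (σ i) * ρ * (K (σ i))ᴴ := fun i => by
    calc K i * (U * ρ * Uᴴ) * (K i)ᴴ = (K i * U) * ρ * (K i * U)ᴴ := by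
          simp only [conjTranspose_mul, Matrix.mul_assoc]
      _ = (c i * star (c i)) • (K (σ i) * ρ * (K (σ i))ᴴ) := by
          rw [hK, conjTranspose_smul, Matrix.smul_mul, Matrix.smul_mul, Matrix.mul_smul, smul_smul]
      _ = K (σ i) * ρ * (K (σ i))ᴴ := by rw [hc, one_smul]
  simp only [hterm]
  exact Equiv.sum_comp σ fun i => K i * ρ * (K i)ᴴ

end KrausMap

theorem K_mul_Uswap4 (i : Fin 4) :
    K i * Uswap4 = ![(1 : ℂ), 1, -1, 1] i • K (Equiv.swap 1 3 i) := by
  fin_cases i <;> ext a b <;> fin_cases a <;> fin_cases b <;>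
    simp [K, Uswap4, Matrix.mul_apply, Fin.sum_univ_four, Equiv.swap_apply_of_ne_of_ne]

/-- the blurred-and-saturated detector is SWAP-invariant,
`Λ_BnS(U ρ U†) = Λ_BnS(ρ)` for every `ρ`; equivalently the identity channel on
`L(ℂ²)` makes the coarse-graining diagram commute:
`id ∘ Λ_BnS = Λ_BnS ∘ U_swap(·)U_swap†`. -/
theorem bns_swap_invariant :
    (∀ ρ : Matrix (Fin 4) (Fin 4) ℂ, ΛBnS (Uswap4 * ρ * Uswap4ᴴ) = ΛBnS ρ) ∧
      (id ∘ ΛBnS) = (fun ρ => ΛBnS (Uswap4 * ρ * Uswap4ᴴ)) := by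
  have hinv : ∀ ρ, ΛBnS (Uswap4 * ρ * Uswap4ᴴ) = ΛBnS ρ :=
    sum_kraus_conj_eq_of_mul_eq_smul K Uswap4 (Equiv.swap 1 3) ![1, 1, -1, 1]
      (by intro i; fin_cases i <;> simp) K_mul_Uswap4
  exact ⟨hinv, funext fun ρ => (hinv ρ).symm⟩
end
end
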